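/- Let G be a graph such that G has a burning sequence of length b(G) whose final source is superfluous (b(G) = b*(G)), and let H = ILT_l(G). Then b(H) = b(G). -/

import Mathlib

variable {V : Type*}

/-- Zero forcing closure: vertices eventually forced starting from `S`. -/
inductive ZFClos (G : SimpleGraph V) (S : Set V) : V → Prop
  | mem (v : V) : v ∈ S → ZFClos G S v
  | force (u v : V) : ZFClos G S u → G.Adj u v →
      (∀ w, G.Adj u w → w ≠ v → ZFClos G S w) → ZFClos G S v

/-- `S` is a zero forcing set of `G`. -/
def IsZFSet (G : SimpleGraph V) (S : Set V) : Prop := ∀ v, ZFClos G S v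

/-- `S` is a failed zero forcing set of `G`. -/
def IsFailedZFSet (G : SimpleGraph V) (S : Set V) : Prop := ¬ IsZFSet G S

/-- The zero forcing number `Z(G)`. -/
noncomputable def zfNumber (G : SimpleGraph V) [Fintype V] : ℕ :=
  sInf {n | ∃ S : Finset V, S.card = n ∧ IsZFSet G ↑S}

/-- The failed zero forcing number `FZ(G)`. -/
noncomputable def fzNumber (G : SimpleGraph V) [Fintype V] : ℕ :=
  sSup {n | ∃ S : Finset V, S.card = n ∧ IsFailedZFSet G ↑S}

/-- Loop zero forcing closure. -/
inductive LZFClos (G : SimpleGraph V) (S : Set V) : V → Prop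
  | mem (v : V) : v ∈ S → LZFClos G S v
  | force (u v : V) : LZFClos G S u → G.Adj u v →
      (∀ w, G.Adj u w → w ≠ v → LZFClos G S w) → LZFClos G S v
  | loop (v : V) : (∀ w, G.Adj v w → LZFClos G S w) → LZFClos G S v

/-- One ILT step: simultaneously clone every vertex.  The clone of `b` is `Sum.inr b`,
adjacent to the closed neighborhood of `b`; clones form an independent set. -/
def iltStep (G : SimpleGraph V) : SimpleGraph (V ⊕ V) where
  Adj x y :=
    match x, y with
    | Sum.inl a, Sum.inl b => G.Adj a b
    | Sum.inl a, Sum.inr b => a = b ∨ G.Adj a b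
    | Sum.inr a, Sum.inl b => b = a ∨ G.Adj b a
    | Sum.inr _, Sum.inr _ => False
  symm := by
    constructor
    rintro (a | a) (b | b) h
    · exact G.symm.1 _ _ h
    · exact h
    · exact h
    · exact h.elim
  loopless := by
    constructor
    rintro (a | a) h
    · exact G.loopless.1 a h
    · exact h

/-- One ILAT step: simultaneously anticlone every vertex.  The anticlone of `b` is
`Sum.inr b`, adjacent to the complement of the closed neighborhood of `b`. -/
def ilatStep (G : SimpleGraph V) : SimpleGraph (V ⊕ V) where
  Adj x y :=
    match x, y with
    | Sum.inl a, Sum.inl b => G.Adj a b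
    | Sum.inl a, Sum.inr b => a ≠ b ∧ ¬ G.Adj a b
    | Sum.inr a, Sum.inl b => b ≠ a ∧ ¬ G.Adj b a
    | Sum.inr _, Sum.inr _ => False
  symm := by
    constructor
    rintro (a | a) (b | b) h
    · exact G.symm.1 _ _ h
    · exact h
    · exact h
    · exact h.elim
  loopless := by
    constructor
    rintro (a | a) h
    · exact G.loopless.1 a h
    · exact h

/-- One IIM step: each vertex `b` is cloned if `c b = true` and anticloned otherwise. -/
def iimStep (G : SimpleGraph V) (c : V → Bool) : SimpleGraph (V ⊕ V) where
  Adj x y :=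
    match x, y with
    | Sum.inl a, Sum.inl b => G.Adj a b
    | Sum.inl a, Sum.inr b => if c b then a = b ∨ G.Adj a b else a ≠ b ∧ ¬ G.Adj a b
    | Sum.inr a, Sum.inl b => if c a then b = a ∨ G.Adj b a else b ≠ a ∧ ¬ G.Adj b a
    | Sum.inr _, Sum.inr _ => False
  symm := by
    constructor
    rintro (a | a) (b | b) h
    · exact G.symm.1 _ _ h
    · exact h
    · exact h
    · exact h.elim
  loopless := by
    constructor
    rintro (a | a) h
    · exact G.loopless.1 a h
    · exact h

/-- Adding a single clone of the vertex `v` (the new vertex is `none`). -/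
def cloneOne (G : SimpleGraph V) (v : V) : SimpleGraph (Option V) where
  Adj x y :=
    match x, y with
    | some a, some b => G.Adj a b
    | some a, none => a = v ∨ G.Adj a v
    | none, some b => b = v ∨ G.Adj b v
    | none, none => False
  symm := by
    constructor
    rintro (_ | a) (_ | b) h
    · exact h.elim
    · exact h
    · exact h
    · exact G.symm.1 _ _ h
  loopless := by
    constructor
    rintro (_ | a) h
    · exact h
    · exact G.loopless.1 a h

/-- The vertex type after `l` doubling steps. -/
def IterV (V : Type*) : ℕ → Type _
  | 0 => V
  | l + 1 => IterV V l ⊕ IterV V l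

instance iterVFintype [Fintype V] : ∀ l, Fintype (IterV V l)
  | 0 => ‹Fintype V›
  | l + 1 =>
    haveI : Fintype (IterV V l) := iterVFintype l
    inferInstanceAs (Fintype (IterV V l ⊕ IterV V l))

/-- `ILT_l(G)`. -/
def iltIter (G : SimpleGraph V) : ∀ l, SimpleGraph (IterV V l)
  | 0 => G
  | l + 1 => iltStep (iltIter G l)

/-- `ILAT_l(G)`. -/
def ilatIter (G : SimpleGraph V) : ∀ l, SimpleGraph (IterV V l)
  | 0 => G
  | l + 1 => ilatStep (ilatIter G l)

/-- Iterated Independent Model: at step `n+1`, vertex `b` of the current graph is cloned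
if `c n b = true` and anticloned otherwise. -/
def iimIter (G : SimpleGraph V) (c : ∀ n, IterV V n → Bool) : ∀ l, SimpleGraph (IterV V l)
  | 0 => G
  | l + 1 => iimStep (iimIter G c l) (c l)

/-- The level (time step of creation) of a vertex; level 0 is the base graph. -/
def iterLevel : ∀ {l}, IterV V l → ℕ
  | 0, _ => 0
  | _ + 1, Sum.inl x => iterLevel x
  | l + 1, Sum.inr _ => l + 1

/-- The unique ancestor in the base graph of a vertex of an iterated graph. -/
def iterProj : ∀ {l}, IterV V l → V
  | 0, v => v
  | _ + 1, Sum.inl x => iterProj x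
  | _ + 1, Sum.inr x => iterProj x

/-- The copy of a base vertex `v` (level 0) inside `IterV V l`. -/
def iterInj0 : ∀ l, V → IterV V l
  | 0, v => v
  | l + 1, v => Sum.inl (iterInj0 l v)

/-- The level-1 clone/anticlone of a base vertex `v`, viewed inside `IterV V (l+1)`. -/
def iterInj1 : ∀ l, V → IterV V (l + 1)
  | 0, v => Sum.inr v
  | l + 1, v => Sum.inl (iterInj1 l v)

/-- The set of burned vertices after `t` burning steps, with sources `s 0, s 1, …`:
at each step the fire spreads to all neighbors of burned vertices and a new source burns. -/
def burnSet (G : SimpleGraph V) (s : ℕ → V) : ℕ → Set V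
  | 0 => ∅
  | t + 1 => insert (s t) (burnSet G s t ∪ {v | ∃ u ∈ burnSet G s t, G.Adj u v})

/-- `G` can be fully burned in `k` steps. -/
def BurnsIn (G : SimpleGraph V) (k : ℕ) : Prop :=
  ∃ s : ℕ → V, burnSet G s k = Set.univ

/-- `G` can be fully burned in `k` steps with the final source superfluous:
the fire spread alone covers everything at step `k`. -/
def BurnsInStar (G : SimpleGraph V) (k : ℕ) : Prop :=
  ∃ s : ℕ → V,
    (burnSet G s (k - 1) ∪ {v | ∃ u ∈ burnSet G s (k - 1), G.Adj u v}) = Set.univ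

/-- The burning number `b(G)`. -/
noncomputable def burningNumber (G : SimpleGraph V) : ℕ := sInf {k | BurnsIn G k}

/-- The burning number `b*(G)` with superfluous final source. -/
noncomputable def burningNumberStar (G : SimpleGraph V) : ℕ := sInf {k | BurnsInStar G k}


/-!
A vertex `x` of `ILT_l(G)` descends from a base vertex `p x`, and every neighbour of `x`
lies in the closed neighbourhood of (the copy of) `p x`. Hence projecting a burning of
`ILT_l(G)` to ancestors burns `G` in the same number of rounds, so `b(G) ≤ b(ILT_l(G))`.
Conversely, running a burning of `G` on the base copy of `G` inside `ILT_l(G)`, every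
descendant of a burned vertex is burned one round later; if the last source of the burning of
`G` is superfluous, that extra round is the last one and `ILT_l(G)` burns in `b*(G) = b(G)`
rounds.
-/

variable {W : Type*}

section Burning

variable {G : SimpleGraph V} {H : SimpleGraph W}

lemma mem_burnSet_succ_of_eq_or_adj {s : ℕ → V} {t : ℕ} {u v : V}
    (hu : u ∈ burnSet G s t) (huv : u = v ∨ G.Adj u v) : v ∈ burnSet G s (t + 1) := by
  rcases huv with rfl | huv
  · exact Or.inr (Or.inl hu)
  · exact Or.inr (Or.inr ⟨u, hu, huv⟩)

lemma burnSet_mapsTo {f : W → V} (hf : ∀ {x y}, H.Adj x y → f x = f y ∨ G.Adj (f x) (f y))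
    (s : ℕ → W) (t : ℕ) : Set.MapsTo f (burnSet H s t) (burnSet G (f ∘ s) t) := by
  induction t with
  | zero => exact fun _ hx => hx.elim
  | succ t ih =>
    rintro x (rfl | hx | ⟨u, hu, hux⟩)
    · exact Or.inl rfl
    · exact Or.inr (Or.inl (ih hx))
    · exact mem_burnSet_succ_of_eq_or_adj (ih hu) (hf hux)

lemma BurnsIn.of_surjective {f : W → V}
    (hf : ∀ {x y}, H.Adj x y → f x = f y ∨ G.Adj (f x) (f y)) (hsurj : Function.Surjective f)
    {k : ℕ} (h : BurnsIn H k) : BurnsIn G k := by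
  obtain ⟨s, hs⟩ := h
  refine ⟨f ∘ s, Set.eq_univ_of_forall fun v => ?_⟩
  obtain ⟨x, rfl⟩ := hsurj v
  exact burnSet_mapsTo hf s k (hs ▸ Set.mem_univ x)

lemma BurnsIn.of_burnsInStar {g : V → W} {p : W → V}
    (hg : ∀ {u v}, G.Adj u v → g u = g v ∨ H.Adj (g u) (g v))
    (hdom : ∀ u x, u = p x ∨ G.Adj u (p x) → g u = x ∨ H.Adj (g u) x)
    {k : ℕ} (h : BurnsInStar G k) : BurnsIn H k := by
  obtain ⟨s, hs⟩ := h
  refine ⟨g ∘ s, Set.eq_univ_of_forall fun x => ?_⟩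
  have hpx : p x ∈ burnSet G s (k - 1) ∪ {v | ∃ u ∈ burnSet G s (k - 1), G.Adj u v} :=
    hs ▸ Set.mem_univ _
  obtain ⟨u, hu, hux⟩ : ∃ u ∈ burnSet G s (k - 1), u = p x ∨ G.Adj u (p x) := by
    rcases hpx with hpx | ⟨u, hu, hux⟩
    · exact ⟨p x, hpx, Or.inl rfl⟩
    · exact ⟨u, hu, Or.inr hux⟩
  cases k with
  | zero => exact hu.elim
  | succ m => exact mem_burnSet_succ_of_eq_or_adj (burnSet_mapsTo hg s m hu) (hdom u x hux)

lemma BurnsInStar.of_burnsIn {k : ℕ} (h : BurnsIn G k) : BurnsInStar G (k + 1) := by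
  obtain ⟨s, hs⟩ := h
  exact ⟨s, Set.eq_univ_of_forall fun v => Or.inl (hs ▸ Set.mem_univ v)⟩

end Burning

/-- `sInf` on `ℕ` is `0` on the empty set, so the sandwich needs `C` and `A` to be empty
together. -/
lemma Nat.sInf_eq_of_subset_of_subset {A B C : Set ℕ} (hAB : A ⊆ B) (hBC : B ⊆ C)
    (hCA : C.Nonempty → A.Nonempty) (h : sInf C = sInf A) : sInf B = sInf C := by
  rcases A.eq_empty_or_nonempty with rfl | hA
  · have hC : C = ∅ := Set.not_nonempty_iff_eq_empty.mp fun hC => (hCA hC).ne_empty rfl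
    have hB : B = ∅ := Set.subset_empty_iff.mp (hC ▸ hBC)
    rw [hB, hC]
  · refine le_antisymm (h ▸ csInf_le_csInf (OrderBot.bddBelow B) hA hAB) ?_
    exact csInf_le_csInf (OrderBot.bddBelow C) (hA.mono hAB) hBC

theorem burningNumber_eq_of_dominated {G : SimpleGraph V} {H : SimpleGraph W}
    {g : V → W} {p : W → V} (hg : ∀ {u v}, G.Adj u v → g u = g v ∨ H.Adj (g u) (g v))
    (hp : ∀ {x y}, H.Adj x y → p x = p y ∨ G.Adj (p x) (p y)) (hsurj : Function.Surjective p)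
    (hdom : ∀ u x, u = p x ∨ G.Adj u (p x) → g u = x ∨ H.Adj (g u) x)
    (h : burningNumber G = burningNumberStar G) : burningNumber H = burningNumber G :=
  Nat.sInf_eq_of_subset_of_subset (fun _ => BurnsIn.of_burnsInStar hg hdom)
    (fun _ => BurnsIn.of_surjective hp hsurj)
    (fun ⟨k, hk⟩ => ⟨k + 1, BurnsInStar.of_burnsIn hk⟩) h

section ILT

variable (G : SimpleGraph V)

lemma iterProj_iterInj0 : ∀ (l : ℕ) (v : V), iterProj (iterInj0 l v) = v
  | 0, _ => rfl
  | l + 1, v => iterProj_iterInj0 l v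

lemma iltIter_adj_iterInj0 : ∀ (l : ℕ) {u v : V}, G.Adj u v →
    (iltIter G l).Adj (iterInj0 l u) (iterInj0 l v)
  | 0, _, _, h => h
  | l + 1, _, _, h => iltIter_adj_iterInj0 l h

lemma iltIter_adj_iterProj : ∀ (l : ℕ) {x y : IterV V l},
    (iltIter G l).Adj x y → iterProj x = iterProj y ∨ G.Adj (iterProj x) (iterProj y)
  | 0, _, _, h => Or.inr h
  | l + 1, Sum.inl _, Sum.inl _, h => iltIter_adj_iterProj l h
  | l + 1, Sum.inl a, Sum.inr b, h =>
      h.elim (fun e => Or.inl (show iterProj a = iterProj b from congrArg _ e))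
        (iltIter_adj_iterProj l)
  | l + 1, Sum.inr a, Sum.inl b, h =>
      h.elim (fun e => Or.inl (show iterProj b = iterProj a from congrArg _ e).symm)
        fun h' => (iltIter_adj_iterProj l h').imp Eq.symm fun h'' => h''.symm
  | _ + 1, Sum.inr _, Sum.inr _, h => h.elim

lemma iltIter_iterInj0_eq_or_adj : ∀ (l : ℕ) (u : V) (x : IterV V l),
    u = iterProj x ∨ G.Adj u (iterProj x) →
      iterInj0 l u = x ∨ (iltIter G l).Adj (iterInj0 l u) x
  | 0, _, _, h => h
  | l + 1, u, Sum.inl y, h => (iltIter_iterInj0_eq_or_adj l u y h).imp (congrArg Sum.inl) id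
  | l + 1, u, Sum.inr y, h => Or.inr (iltIter_iterInj0_eq_or_adj l u y h)

end ILT

/-- if `b(G) = b*(G)` then `b(ILT_l(G)) = b(G)`. -/
theorem stmt16 (G : SimpleGraph V) (l : ℕ)
    (h : burningNumber G = burningNumberStar G) :
    burningNumber (iltIter G l) = burningNumber G :=
  burningNumber_eq_of_dominated (fun huv => Or.inr (iltIter_adj_iterInj0 G l huv))
    (iltIter_adj_iterProj G l) (fun v => ⟨iterInj0 l v, iterProj_iterInj0 l v⟩)
    (iltIter_iterInj0_eq_or_adj G l) h
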